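/- Let G be a simple graph, i a vertex of G, and k a nonnegative integer. Then (G,i) allows the nullity pair (k,k) with the SNIP if and only if (G,i) allows the nullity pair (k+1,k) with the SNIP. -/

import Mathlib

open Matrix

/-- The nullity of a square real matrix: the dimension of its kernel. -/
noncomputable def nullity {V : Type*} [Fintype V] (A : Matrix V V ℝ) : ℕ :=
  Module.finrank ℝ (LinearMap.ker A.mulVecLin)

/-- The principal submatrix of `A` obtained by deleting row and column `i`. -/
def deleteRC {V : Type*} (A : Matrix V V ℝ) (i : V) :
    Matrix {v : V // v ≠ i} {v : V // v ≠ i} ℝ :=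
  A.submatrix (fun v => (v : V)) (fun v => (v : V))

/-- `A` has the `i`-strong nullity interlacing property. -/
def HasSNIP {V : Type*} [Fintype V] [DecidableEq V] (A : Matrix V V ℝ) (i : V) : Prop :=
  ∀ X : Matrix V V ℝ, X.IsSymm → A.hadamard X = 0 →
    (1 : Matrix V V ℝ).hadamard X = 0 →
    (∀ r, r ≠ i → ∀ c, (A * X) r c = 0) → X = 0

/-- `A` has the strong Arnold property. -/
def HasSAP {V : Type*} [Fintype V] [DecidableEq V] (A : Matrix V V ℝ) : Prop :=
  ∀ X : Matrix V V ℝ, X.IsSymm → A.hadamard X = 0 →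
    (1 : Matrix V V ℝ).hadamard X = 0 → A * X = 0 → X = 0

/-- `A` belongs to `𝒮(G)`. -/
def InSG {V : Type*} (G : SimpleGraph V) (A : Matrix V V ℝ) : Prop :=
  A.IsSymm ∧ ∀ u v : V, u ≠ v → (A u v ≠ 0 ↔ G.Adj u v)

/-- `(G,i)` allows the nullity pair `(k,l)`. -/
def Allows {V : Type*} [Fintype V] [DecidableEq V] (G : SimpleGraph V) (i : V)
    (k l : ℕ) : Prop :=
  ∃ A : Matrix V V ℝ, InSG G A ∧ nullity A = k ∧ nullity (deleteRC A i) = l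

/-- `(G,i)` allows the nullity pair `(k,l)` with the SNIP. -/
def AllowsSNIP {V : Type*} [Fintype V] [DecidableEq V] (G : SimpleGraph V) (i : V)
    (k l : ℕ) : Prop :=
  ∃ A : Matrix V V ℝ, InSG G A ∧ nullity A = k ∧ nullity (deleteRC A i) = l ∧ HasSNIP A i

/-!
Changing the diagonal entry `A i i` keeps `A` in `𝒮(G)`, leaves `A(i)` unchanged and preserves
the `i`-SNIP (the test matrices `X` have zero diagonal). So it suffices that for symmetric `A`
with `null A(i) = ℓ ≤ null A` both `ℓ` and `ℓ + 1` occur as `null (A + t E_ii)`.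

Let `W = {x | (A x)_j = 0 for j ≠ i}`, and `φ x = (A x)_i`, `ψ x = x_i` on `W`. Then
`ker (A + t E_ii) = ker (φ + t ψ)` and `ker A(i) ≅ ker ψ` by extension by zero. Symmetry of `A`
gives `φ x ψ y = φ y ψ x`, hence `φ = c ψ` once `ψ ≠ 0`, and `t = -c`, `t = 1 - c` give the
nullities `dim W = ℓ + 1` and `ℓ`. Finally `ψ = 0` is impossible: with `ℓ ≤ null A` it forces
`ker A = W ⊆ e_iᗮ`, so `e_i = A v` for some `v`, which lies in `W = ker A`.
-/

lemma Matrix.IsSymm.exists_mulVec_eq {V : Type*} [Fintype V] [DecidableEq V]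
    {A : Matrix V V ℝ} (hA : A.IsSymm) {b : V → ℝ}
    (hb : ∀ x, A *ᵥ x = 0 → b ⬝ᵥ x = 0) : ∃ v, A *ᵥ v = b := by
  have hT : (toEuclideanLin A).IsSymmetric :=
    isSymmetric_toEuclideanLin_iff.2 (isHermitian_iff_isSymm.2 hA)
  obtain ⟨v, hv⟩ : WithLp.toLp 2 b ∈ LinearMap.range (toEuclideanLin A) := by
    rw [← hT.adjoint_eq, ← LinearMap.orthogonal_ker, Submodule.mem_orthogonal]
    intro x hx
    have hx' : A *ᵥ x.ofLp = 0 := by simpa [toEuclideanLin] using congrArg WithLp.ofLp hx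
    simpa [PiLp.inner_apply, dotProduct, mul_comm] using hb x.ofLp hx'
  exact ⟨v.ofLp, by simpa [toEuclideanLin] using congrArg WithLp.ofLp hv⟩

lemma Module.Dual.exists_eq_smul_of_mul_comm {K M : Type*} [Field K] [AddCommGroup M]
    [Module K M] {φ ψ : Module.Dual K M} (h : ∀ x y, φ x * ψ y = φ y * ψ x) (hψ : ψ ≠ 0) :
    ∃ c : K, φ = c • ψ := by
  obtain ⟨y, hy⟩ : ∃ y, ψ y ≠ 0 := by
    by_contra! h'
    exact hψ (LinearMap.ext h')
  refine ⟨φ y / ψ y, LinearMap.ext fun x => ?_⟩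
  rw [LinearMap.smul_apply, smul_eq_mul, div_mul_eq_mul_div, h, mul_div_cancel_right₀ _ hy]

lemma Submodule.finrank_ker_domRestrict {K M : Type*} [Field K] [AddCommGroup M]
    [Module K M] (W : Submodule K M) (f : M →ₗ[K] K) :
    Module.finrank K (LinearMap.ker (f.domRestrict W)) =
      Module.finrank K ↥(W ⊓ LinearMap.ker f) := by
  have h : W.comap W.subtype ⊓ (LinearMap.ker f).comap W.subtype =
      (W ⊓ LinearMap.ker f).comap W.subtype := (Submodule.comap_inf _ _ _).symm
  rw [Submodule.comap_subtype_self, top_inf_eq] at h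
  rw [LinearMap.ker_domRestrict, h, (Submodule.comapSubtypeEquivOfLe inf_le_left).finrank_eq]

lemma extendByZero_val_apply_self {V : Type*} (i : V) (y : {j // j ≠ i} → ℝ) :
    Function.ExtendByZero.linearMap ℝ Subtype.val y i = 0 := by
  simp [Function.extend_apply']

lemma extendByZero_val_restrict {V : Type*} {i : V} {x : V → ℝ} (hx : x i = 0) :
    Function.ExtendByZero.linearMap ℝ Subtype.val (fun j : {j // j ≠ i} => x j) = x := by
  funext j
  by_cases hj : j = i
  · subst hj; simp [Function.extend_apply', hx]
  · simpa using Subtype.val_injective.extend_apply (fun j : {j // j ≠ i} => x j) 0 ⟨j, hj⟩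

section

variable {V : Type*} [Fintype V]

def kerDeleteRow (A : Matrix V V ℝ) (i : V) : Submodule ℝ (V → ℝ) :=
  LinearMap.ker (A.submatrix (fun j : {j // j ≠ i} => (j : V)) id).mulVecLin

lemma mem_kerDeleteRow {A : Matrix V V ℝ} {i : V} {x : V → ℝ} :
    x ∈ kerDeleteRow A i ↔ ∀ j ≠ i, (A *ᵥ x) j = 0 := by
  simp [kerDeleteRow, funext_iff, mulVec, dotProduct]

lemma ker_mulVecLin_le_kerDeleteRow (A : Matrix V V ℝ) (i : V) :
    LinearMap.ker A.mulVecLin ≤ kerDeleteRow A i := fun x (hx : A *ᵥ x = 0) =>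
  mem_kerDeleteRow.2 fun j _ => by rw [hx, Pi.zero_apply]

def rowFunctional (A : Matrix V V ℝ) (i : V) : Module.Dual ℝ (kerDeleteRow A i) :=
  (LinearMap.proj i ∘ₗ A.mulVecLin).domRestrict _

def coordFunctional (A : Matrix V V ℝ) (i : V) : Module.Dual ℝ (kerDeleteRow A i) :=
  (LinearMap.proj (R := ℝ) i).domRestrict _

lemma rowFunctional_mul_coordFunctional_comm {A : Matrix V V ℝ} (hA : A.IsSymm) (i : V)
    (x y : kerDeleteRow A i) :
    rowFunctional A i x * coordFunctional A i y =
      rowFunctional A i y * coordFunctional A i x := by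
  have key : ∀ u w : kerDeleteRow A i,
      A *ᵥ u ⬝ᵥ w = rowFunctional A i u * coordFunctional A i w := fun u w =>
    Fintype.sum_eq_single i fun j hj => by rw [mem_kerDeleteRow.1 u.2 j hj, zero_mul]
  rw [← key, ← key, dotProduct_comm, dotProduct_mulVec, ← mulVec_transpose, hA]

variable [DecidableEq V]

lemma ker_add_single (A : Matrix V V ℝ) (i : V) (t : ℝ) :
    LinearMap.ker (A + single i i t).mulVecLin = kerDeleteRow A i ⊓
      LinearMap.ker (LinearMap.proj i ∘ₗ A.mulVecLin + t • LinearMap.proj i) := by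
  ext x
  simp only [LinearMap.mem_ker, Submodule.mem_inf, mem_kerDeleteRow, mulVecLin_apply,
    add_mulVec, single_mulVec, funext_iff]
  constructor
  · intro h
    exact ⟨fun j hj => by simpa [hj] using h j, by simpa using h i⟩
  · rintro ⟨h, hi⟩ j
    by_cases hj : j = i
    · subst hj; simpa using hi
    · simp [hj, h j hj]

lemma nullity_add_single (A : Matrix V V ℝ) (i : V) (t : ℝ) :
    nullity (A + single i i t) =
      Module.finrank ℝ (LinearMap.ker (rowFunctional A i + t • coordFunctional A i)) := by
  rw [nullity, ker_add_single, ← Submodule.finrank_ker_domRestrict]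
  rfl

lemma mulVec_extendByZero_val (A : Matrix V V ℝ) (i : V) (y : {j // j ≠ i} → ℝ)
    (j : {j // j ≠ i}) :
    (A *ᵥ Function.ExtendByZero.linearMap ℝ Subtype.val y) j = (deleteRC A i *ᵥ y) j := by
  simp [mulVec, dotProduct, Fintype.sum_eq_add_sum_subtype_ne _ i, deleteRC]

lemma nullity_deleteRC_eq_finrank_inf (A : Matrix V V ℝ) (i : V) :
    nullity (deleteRC A i) =
      Module.finrank ℝ ↥(kerDeleteRow A i ⊓ LinearMap.ker (LinearMap.proj i)) := by
  let E := Function.ExtendByZero.linearMap ℝ (Subtype.val : {j // j ≠ i} → V)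
  have hmap : (LinearMap.ker (deleteRC A i).mulVecLin).map E =
      kerDeleteRow A i ⊓ LinearMap.ker (LinearMap.proj i) := by
    ext x
    constructor
    · rintro ⟨y, hy : deleteRC A i *ᵥ y = 0, rfl⟩
      refine ⟨mem_kerDeleteRow.2 fun j hj => ?_, extendByZero_val_apply_self i y⟩
      rw [mulVec_extendByZero_val A i y ⟨j, hj⟩, hy, Pi.zero_apply]
    · rintro ⟨hx, hxi : x i = 0⟩
      refine ⟨fun j => x j, funext fun j => ?_, extendByZero_val_restrict hxi⟩
      rw [mulVecLin_apply, ← mulVec_extendByZero_val, extendByZero_val_restrict hxi]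
      exact mem_kerDeleteRow.1 hx j j.2
  rw [nullity, ← hmap, (Submodule.equivMapOfInjective E
    (Function.extend_injective Subtype.val_injective (0 : V → ℝ)) _).finrank_eq]

lemma nullity_deleteRC_eq (A : Matrix V V ℝ) (i : V) :
    nullity (deleteRC A i) = Module.finrank ℝ (LinearMap.ker (coordFunctional A i)) := by
  rw [nullity_deleteRC_eq_finrank_inf, ← Submodule.finrank_ker_domRestrict]
  rfl

lemma coordFunctional_ne_zero {A : Matrix V V ℝ} (hA : A.IsSymm) (i : V)
    (h : nullity (deleteRC A i) ≤ nullity A) : coordFunctional A i ≠ 0 := by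
  intro hψ
  have hW : kerDeleteRow A i ≤ LinearMap.ker (LinearMap.proj i) := fun x hx =>
    LinearMap.congr_fun hψ ⟨x, hx⟩
  have hker : LinearMap.ker A.mulVecLin = kerDeleteRow A i := by
    refine Submodule.eq_of_le_of_finrank_le (ker_mulVecLin_le_kerDeleteRow A i) ?_
    rwa [← nullity, ← inf_eq_left.2 hW, ← nullity_deleteRC_eq_finrank_inf]
  obtain ⟨v, hv⟩ := hA.exists_mulVec_eq (b := Pi.single i 1) fun x hx => by
    have hxi : x i = 0 := hW (hker ▸ hx)
    simp [hxi]
  have hv0 : v ∈ LinearMap.ker A.mulVecLin :=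
    hker ▸ mem_kerDeleteRow.2 fun j hj => by simp [hv, hj]
  simpa [hv] using congrFun (hv0 : A *ᵥ v = 0) i

lemma exists_nullity_add_single {A : Matrix V V ℝ} (hA : A.IsSymm) (i : V)
    (h : nullity (deleteRC A i) ≤ nullity A) :
    (∃ t, nullity (A + single i i t) = nullity (deleteRC A i)) ∧
      ∃ t, nullity (A + single i i t) = nullity (deleteRC A i) + 1 := by
  have hψ := coordFunctional_ne_zero hA i h
  obtain ⟨c, hc⟩ :=
    Module.Dual.exists_eq_smul_of_mul_comm (rowFunctional_mul_coordFunctional_comm hA i) hψ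
  have key : ∀ t, nullity (A + single i i t) =
      Module.finrank ℝ (LinearMap.ker ((c + t) • coordFunctional A i)) := fun t => by
    rw [nullity_add_single, hc, add_smul]
  refine ⟨⟨1 - c, ?_⟩, ⟨-c, ?_⟩⟩
  · rw [key, add_sub_cancel, one_smul, nullity_deleteRC_eq]
  · rw [key, add_neg_cancel, zero_smul, LinearMap.ker_zero, finrank_top, nullity_deleteRC_eq,
      Module.Dual.finrank_ker_add_one_of_ne_zero hψ]

end

section

variable {V : Type*} [DecidableEq V]

lemma deleteRC_add_single (A : Matrix V V ℝ) (i : V) (t : ℝ) :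
    deleteRC (A + single i i t) i = deleteRC A i := by
  ext u v
  simp [deleteRC, single_apply_of_row_ne (Ne.symm u.2)]

lemma InSG.add_single {G : SimpleGraph V} {A : Matrix V V ℝ} (hA : InSG G A) (i : V) (t : ℝ) :
    InSG G (A + single i i t) := by
  refine ⟨hA.1.add (by simp [IsSymm, transpose_single]), fun u v huv => ?_⟩
  have hzero : single i i t u v = 0 :=
    single_apply_of_ne _ _ _ _ _ fun h => huv (h.1.symm.trans h.2)
  rw [Matrix.add_apply, hzero, add_zero]
  exact hA.2 u v huv

variable [Fintype V]

lemma HasSNIP.add_single {A : Matrix V V ℝ} {i : V} (hA : HasSNIP A i) (t : ℝ) :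
    HasSNIP (A + single i i t) i := by
  intro X hX hAX hdiag hrows
  have hXii : X i i = 0 := by simpa using congrFun (congrFun hdiag i) i
  refine hA X hX ?_ hdiag fun r hr c => ?_
  · ext u v
    have := congrFun (congrFun hAX u) v
    by_cases huv : u = i ∧ v = i
    · obtain ⟨rfl, rfl⟩ := huv
      simp [hXii]
    · have hzero : single i i t u v = 0 :=
        single_apply_of_ne _ _ _ _ _ fun h => huv ⟨h.1.symm, h.2.symm⟩
      simpa [hzero] using this
  · simpa [add_mul, single_mul_apply_of_ne _ _ _ _ _ hr] using hrows r hr c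

lemma allowsSNIP_nullity_add_single {G : SimpleGraph V} {A : Matrix V V ℝ} {i : V}
    (hG : InSG G A) (hS : HasSNIP A i) (t : ℝ) :
    AllowsSNIP G i (nullity (A + single i i t)) (nullity (deleteRC A i)) :=
  ⟨_, hG.add_single i t, rfl, by rw [deleteRC_add_single], hS.add_single t⟩

end

/-- `(G,i)` allows `(k,k)` with the SNIP iff it allows `(k+1,k)` with the SNIP. -/
theorem stmt8 {V : Type*} [Fintype V] [DecidableEq V] (G : SimpleGraph V) (i : V)
    (k : ℕ) : AllowsSNIP G i k k ↔ AllowsSNIP G i (k + 1) k := by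
  constructor
  · rintro ⟨A, hG, hk, hl, hS⟩
    obtain ⟨-, t, ht⟩ := exists_nullity_add_single hG.1 i (by omega)
    simpa [ht, hl] using allowsSNIP_nullity_add_single hG hS t
  · rintro ⟨A, hG, hk, hl, hS⟩
    obtain ⟨⟨t, ht⟩, -⟩ := exists_nullity_add_single hG.1 i (by omega)
    simpa [ht, hl] using allowsSNIP_nullity_add_single hG hS t
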